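/- arXiv:1909.10059 — 4 statements merged into one kernel-verified Lean document; each statement's English description precedes it below -/
import Mathlib

section
/- Let $\{a_n\}_{n=1}^\infty$ be a sequence of positive real numbers with $\lim_{n\to\infty} a_n = 0$, and let $r > 1$. Then either there exists $C > 0$ such that $a_n < C r^{-n}$ for all $n$, or there exists a strictly increasing sequence of indices $\{n_k\}_{k=1}^\infty$ (with each $n_k \geq 2$) such that for every $k$, $a_{n_k} > a_{n_k+1}$ and $r\, a_{n_k} \geq a_{n_k - 1}$. -/
/-!
Let `S` be the set of indices `n ≥ 2` with `a (n+1) < a n` and `a (n-1) ≤ r a n`. If `S` is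
infinite, enumerating it gives the second alternative. Otherwise every late index satisfies
`r a n < a (n-1)`: if `a (n-1) ≤ r a n` at some late `n`, then `a n ≤ a (n+1)` (as `n ∉ S`), hence
`a n ≤ a (n+1) ≤ r a (n+1)`, and by induction `a` is nondecreasing from `n` on, contradicting
`0 < a n` and `a → 0`. So `a n * r ^ n` is eventually decreasing, hence bounded.
-/

open Filter Topology

theorem exists_pos_forall_lt_of_antitoneOn_Ici {b : ℕ → ℝ} {N : ℕ} (hb : AntitoneOn b (Set.Ici N)) :
    ∃ C > 0, ∀ n, b n < C := by
  obtain ⟨B, hB⟩ := ((Set.finite_Iic N).image b).bddAbove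
  have hle : ∀ n, b n ≤ B := by
    intro n
    rcases le_total n N with hn | hn
    · exact hB ⟨n, hn, rfl⟩
    · exact (hb Set.self_mem_Ici hn hn).trans (hB ⟨N, Set.self_mem_Iic, rfl⟩)
  exact ⟨max B 0 + 1, by positivity, fun n => by linarith [hle n, le_max_left B 0]⟩

theorem mul_lt_apply_pred_of_tendsto_zero {a : ℕ → ℝ} {r : ℝ} (hr : 1 ≤ r)
    (hpos : ∀ n, 1 ≤ n → 0 < a n) (hlim : Tendsto a atTop (𝓝 0)) {N : ℕ} (hN : 1 ≤ N)
    (hdrop : ∀ n ≥ N, a (n + 1) < a n → r * a n < a (n - 1)) {n : ℕ} (hn : N ≤ n) :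
    r * a n < a (n - 1) := by
  by_contra! hle
  have hle_succ {m : ℕ} (hm : N ≤ m) (h : a (m - 1) ≤ r * a m) : a m ≤ a (m + 1) :=
    not_lt.1 fun hlt => (hdrop m hm hlt).not_ge h
  have hrecover : ∀ m ≥ n, a (m - 1) ≤ r * a m := by
    refine Nat.le_induction hle fun m hm ih => ?_
    calc a (m + 1 - 1) = a m := rfl
      _ ≤ a (m + 1) := hle_succ (hn.trans hm) ih
      _ ≤ r * a (m + 1) := le_mul_of_one_le_left (hpos _ (by omega)).le hr
  have hmono : MonotoneOn a (Set.Ici n) :=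
    monotoneOn_nat_Ici_of_le_succ fun m hm => hle_succ (hn.trans hm) (hrecover m hm)
  have hnonpos : a n ≤ 0 :=
    ge_of_tendsto hlim (eventually_atTop.2 ⟨n, fun m hm => hmono Set.self_mem_Ici hm hm⟩)
  exact (hpos n (hN.trans hn)).not_ge hnonpos

/-- dichotomy for positive sequences tending to zero. -/
theorem stmt0 (a : ℕ → ℝ) (r : ℝ) (hpos : ∀ n, 1 ≤ n → 0 < a n)
    (hlim : Tendsto a atTop (nhds 0)) (hr : 1 < r) :
    (∃ C > 0, ∀ n, 1 ≤ n → a n < C / r ^ n) ∨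
    (∃ m : ℕ → ℕ, StrictMono m ∧ (∀ k, 2 ≤ m k) ∧
      ∀ k, a (m k) > a (m k + 1) ∧ r * a (m k) ≥ a (m k - 1)) := by
  set S : Set ℕ := {n | 2 ≤ n ∧ a n > a (n + 1) ∧ r * a n ≥ a (n - 1)}
  rcases S.finite_or_infinite with hfin | hinf
  · left
    obtain ⟨B, hB⟩ := hfin.bddAbove
    have hdrop : ∀ n ≥ B + 2, r * a n < a (n - 1) :=
      fun n hn => mul_lt_apply_pred_of_tendsto_zero (N := B + 2) hr.le hpos hlim (by omega)
        (fun m hm hlt => lt_of_not_ge fun hge => by linarith [hB ⟨by omega, hlt, hge⟩]) hn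
    have hanti : AntitoneOn (fun n => a n * r ^ n) (Set.Ici (B + 1)) :=
      antitoneOn_nat_Ici_of_succ_le fun n hn => by
        have hstep : r * a (n + 1) < a n := hdrop (n + 1) (by omega)
        calc a (n + 1) * r ^ (n + 1) = r * a (n + 1) * r ^ n := by ring
          _ ≤ a n * r ^ n := by gcongr
    obtain ⟨C, hC0, hC⟩ := exists_pos_forall_lt_of_antitoneOn_Ici hanti
    exact ⟨C, hC0, fun n _ => (lt_div_iff₀ (by positivity)).2 (hC n)⟩
  · right
    exact ⟨Nat.nth S, Nat.nth_strictMono hinf, fun k => (Nat.nth_mem_of_infinite hinf k).1,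
      fun k => (Nat.nth_mem_of_infinite hinf k).2⟩
end

section
/- Let $\{a_n\}_{n=1}^\infty$ be an unbounded sequence of real numbers, and suppose there exist $r > 1$ and $C > 0$ such that $a_n < C r^n$ for all $n \in \mathbb{N}$. Then for any $\gamma > r$ there exists a strictly increasing sequence of indices $\{n_k\}_{k=1}^\infty$ (with each $n_k \geq 2$) such that for every $k$, $a_{n_k} > a_{n_k - 1}$ and $\gamma\, a_{n_k} \geq a_{n_k + 1}$. -/
/-!
Weight the sequence by `γ ^ n`. Since `a n < C * r ^ n` with `r < γ`, the weighted values
`a n / γ ^ n` have nonpositive upper limit, so among the indices where `a` exceeds its values up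
to a given `N` (such indices exist by unboundedness) the weighted sequence attains a maximum, at
some `n > N`. Comparing weights at `n - 1`, `n` and `n + 1` gives `γ * a (n - 1) ≤ a n` and
`a (n + 1) ≤ γ * a n`, unless `a (n ± 1)` is already below the level `a n` exceeds.
-/

open Filter Set

lemma exists_isMaxOn_of_eventually_lt {f : ℕ → ℝ} {s : Set ℕ} {n₀ : ℕ} (hn₀ : n₀ ∈ s)
    (h : ∀ᶠ n in atTop, f n < f n₀) : ∃ n ∈ s, IsMaxOn f s n := by
  obtain ⟨B, hB⟩ := eventually_atTop.1 h
  obtain ⟨n, hn, hmax⟩ := (s ∩ Iio (max B (n₀ + 1))).exists_max_image f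
    ((finite_Iio _).inter_of_right s) ⟨n₀, hn₀, by simp⟩
  refine ⟨n, hn.1, fun j hj => ?_⟩
  by_cases hjB : j < max B (n₀ + 1)
  · exact hmax j ⟨hj, hjB⟩
  · exact (hB j (by omega)).le.trans (hmax n₀ ⟨hn₀, by simp⟩)

lemma div_pow_le_div_pow_succ_iff {x y γ : ℝ} (hγ : 0 < γ) (k : ℕ) :
    x / γ ^ k ≤ y / γ ^ (k + 1) ↔ γ * x ≤ y := by
  rw [div_le_div_iff₀ (by positivity) (by positivity), pow_succ, mul_comm (γ ^ k) γ, ← mul_assoc,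
    mul_comm x γ, mul_le_mul_iff_of_pos_right (by positivity)]

lemma div_pow_succ_le_div_pow_iff {x y γ : ℝ} (hγ : 0 < γ) (k : ℕ) :
    y / γ ^ (k + 1) ≤ x / γ ^ k ↔ y ≤ γ * x := by
  rw [div_le_div_iff₀ (by positivity) (by positivity), pow_succ, mul_comm (γ ^ k) γ, ← mul_assoc,
    mul_comm x γ, mul_le_mul_iff_of_pos_right (by positivity)]

lemma eventually_lt_mul_pow_of_le_mul_pow {a : ℕ → ℝ} {r γ C : ℝ} (hr : 0 ≤ r) (hrγ : r < γ)
    (h : ∀ᶠ n in atTop, a n ≤ C * r ^ n) {ε : ℝ} (hε : 0 < ε) :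
    ∀ᶠ n in atTop, a n < ε * γ ^ n := by
  have hγ : 0 < γ := hr.trans_lt hrγ
  have hdecay : Tendsto (fun n => C * (r / γ) ^ n) atTop (nhds 0) := by
    simpa using (tendsto_pow_atTop_nhds_zero_of_lt_one (div_nonneg hr hγ.le)
      ((div_lt_one hγ).2 hrγ)).const_mul C
  filter_upwards [h, hdecay.eventually_lt_const hε] with n hn hsmall
  calc a n ≤ C * (r / γ) ^ n * γ ^ n := by
        rwa [div_pow, mul_assoc, div_mul_cancel₀ _ (by positivity)]
    _ < ε * γ ^ n := by gcongr

theorem frequently_lt_and_le_mul_of_not_bddAbove {a : ℕ → ℝ} {γ : ℝ} (hγ : 1 < γ)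
    (hunbdd : ¬BddAbove (range a)) (hdecay : ∀ ε > 0, ∀ᶠ n in atTop, a n < ε * γ ^ n) :
    ∃ᶠ n in atTop, a (n - 1) < a n ∧ a (n + 1) ≤ γ * a n := by
  have hγ0 : 0 < γ := zero_lt_one.trans hγ
  refine frequently_atTop'.2 fun N => ?_
  obtain ⟨M, hM⟩ : BddAbove (a '' Iic N) := ((finite_Iic N).image a).bddAbove
  set L := max M 0
  have hbelow : ∀ j ≤ N, a j ≤ L := fun j hj => (hM ⟨j, hj, rfl⟩).trans (le_max_left _ _)
  obtain ⟨-, ⟨n₀, rfl⟩, hn₀⟩ := not_bddAbove_iff.1 hunbdd L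
  set w : ℕ → ℝ := fun j => a j / γ ^ j
  have hw₀ : 0 < w n₀ := div_pos ((le_max_right _ _).trans_lt hn₀) (by positivity)
  have hfar : ∀ᶠ j in atTop, w j < w n₀ := by
    filter_upwards [hdecay _ hw₀] with j hj
    exact (div_lt_iff₀ (by positivity)).2 hj
  obtain ⟨n, hn, hmax⟩ := exists_isMaxOn_of_eventually_lt (s := {j | L < a j}) hn₀ hfar
  have hpos : 0 < a n := (le_max_right _ _).trans_lt hn
  have hNn : N < n := lt_of_not_ge fun h => (hbelow n h).not_gt hn
  obtain ⟨m, rfl⟩ : ∃ m, n = m + 1 := ⟨n - 1, by omega⟩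
  refine ⟨m + 1, hNn, ?_, ?_⟩
  · rw [Nat.add_sub_cancel]
    by_cases hprev : a m ≤ L
    · exact hprev.trans_lt hn
    · have hrise : γ * a m ≤ a (m + 1) := (div_pow_le_div_pow_succ_iff hγ0 m).1 (hmax (not_le.1 hprev))
      nlinarith
  · by_cases hnext : a (m + 1 + 1) ≤ L
    · exact hnext.trans (hn.le.trans (le_mul_of_one_le_left hpos.le hγ.le))
    · exact (div_pow_succ_le_div_pow_iff hγ0 (m + 1)).1 (hmax (not_le.1 hnext))

theorem stmt1_general (a : ℕ → ℝ) (r C : ℝ) (hr : 1 < r)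
    (hunbdd : ∀ M : ℝ, ∃ n, 1 ≤ n ∧ M < a n)
    (hgrowth : ∀ n, 1 ≤ n → a n < C * r ^ n)
    (γ : ℝ) (hγ : r < γ) :
    ∃ m : ℕ → ℕ, StrictMono m ∧ (∀ k, 2 ≤ m k) ∧
      ∀ k, a (m k) > a (m k - 1) ∧ γ * a (m k) ≥ a (m k + 1) := by
  have hnot_bdd : ¬BddAbove (range a) := not_bddAbove_iff.2 fun M =>
    let ⟨n, _, hn⟩ := hunbdd M; ⟨a n, mem_range_self n, hn⟩
  have hdecay : ∀ ε > 0, ∀ᶠ n in atTop, a n < ε * γ ^ n := fun ε hε =>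
    eventually_lt_mul_pow_of_le_mul_pow (zero_le_one.trans hr.le) hγ
      (eventually_atTop.2 ⟨1, fun n hn => (hgrowth n hn).le⟩) hε
  have hfreq := (frequently_lt_and_le_mul_of_not_bddAbove (hr.trans hγ) hnot_bdd
    hdecay).and_eventually (eventually_ge_atTop 2)
  obtain ⟨m, hmono, hm⟩ := extraction_of_frequently_atTop hfreq
  exact ⟨m, hmono, fun k => (hm k).2, fun k => (hm k).1⟩

/-- unbounded sequences of at most exponential growth. -/
theorem stmt1 (a : ℕ → ℝ) (r C : ℝ) (hr : 1 < r) (hC : 0 < C)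
    (hunbdd : ∀ M : ℝ, ∃ n, 1 ≤ n ∧ M < a n)
    (hgrowth : ∀ n, 1 ≤ n → a n < C * r ^ n)
    (γ : ℝ) (hγ : r < γ) :
    ∃ m : ℕ → ℕ, StrictMono m ∧ (∀ k, 2 ≤ m k) ∧
      ∀ k, a (m k) > a (m k - 1) ∧ γ * a (m k) ≥ a (m k + 1) :=
  stmt1_general a r C hr hunbdd hgrowth γ hγ
end

section
/- Let $\mathcal{H}$ be a Hilbert space, $A$ a bounded self-adjoint operator on $\mathcal{H}$, and $\{j_\alpha\}_{\alpha \in S}$ a countable family of bounded self-adjoint operators with $\sum_\alpha j_\alpha^2 = I$ (converging strongly). Let $C = -2\sum_\alpha [A, j_\alpha]^2$ (assumed to converge to a bounded operator). Then for every nonzero $\varphi \in \mathcal{H}$ there exists $\alpha \in S$ with $j_\alpha \varphi \neq 0$ and $\|A j_\alpha \varphi\|^2 \leq \left(2 \frac{\|A\varphi\|^2}{\|\varphi\|^2} + \|C\|\right) \|j_\alpha \varphi\|^2$. -/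
/-!
Write `B_α = [A, j_α]`. Since `A j_α φ = j_α A φ + B_α φ`, we have
`‖A j_α φ‖² ≤ 2‖j_α A φ‖² + 2‖B_α φ‖²`. Summing over `α`, the partition of unity gives
`∑ ‖j_α A φ‖² = ‖A φ‖²`, and skew-adjointness of `B_α` gives `∑ 2‖B_α φ‖² = re ⟪φ, C φ⟫ ≤ ‖C‖ ‖φ‖²`.
So `∑ ‖A j_α φ‖² ≤ K ∑ ‖j_α φ‖²` with `K = 2‖Aφ‖²/‖φ‖² + ‖C‖`, and some term with
`j_α φ ≠ 0` must satisfy the inequality termwise.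
-/

open ContinuousLinearMap RCLike
open scoped InnerProductSpace

theorem exists_ne_zero_le_mul_of_hasSum_le {ι : Type*} {f g w : ι → ℝ} {G W K : ℝ}
    (hf : ∀ i, 0 ≤ f i) (hfg : ∀ i, f i ≤ g i) (hg : HasSum g G) (hw : HasSum w W)
    (hW : W ≠ 0) (hGW : G ≤ K * W) :
    ∃ i, w i ≠ 0 ∧ f i ≤ K * w i := by
  by_contra! hlt
  obtain ⟨i, hi⟩ : ∃ i, w i ≠ 0 := by
    by_contra! hzero
    rw [show w = 0 from funext hzero] at hw
    exact hW (hw.unique hasSum_zero)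
  have hle : ∀ i, K * w i ≤ g i := fun i => by
    by_cases h : w i = 0
    · simpa [h] using (hf i).trans (hfg i)
    · exact (hlt i h).le.trans (hfg i)
  have := hasSum_lt hle ((hlt i hi).trans_le (hfg i)) (hw.mul_left K) hg
  linarith

theorem norm_apply_apply_sq_le {R E : Type*} [Ring R] [SeminormedAddCommGroup E] [Module R E]
    {A T : E →L[R] E} (x : E) :
    ‖A (T x)‖ ^ 2 ≤ 2 * ‖T (A x)‖ ^ 2 + 2 * ‖(A ∘L T - T ∘L A) x‖ ^ 2 := by
  have hsplit : A (T x) = T (A x) + (A ∘L T - T ∘L A) x := by simp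
  calc ‖A (T x)‖ ^ 2 ≤ (‖T (A x)‖ + ‖(A ∘L T - T ∘L A) x‖) ^ 2 := by
        rw [hsplit]; gcongr; exact norm_add_le _ _
    _ ≤ _ := by linarith [add_sq_le (a := ‖T (A x)‖) (b := ‖(A ∘L T - T ∘L A) x‖)]

section

variable {𝕜 E : Type*} [RCLike 𝕜] [NormedAddCommGroup E] [InnerProductSpace 𝕜 E]

theorem re_inner_apply_le_opNorm_mul_sq (C : E →L[𝕜] E) (x : E) :
    re ⟪x, C x⟫_𝕜 ≤ ‖C‖ * ‖x‖ ^ 2 :=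
  calc re ⟪x, C x⟫_𝕜 ≤ ‖x‖ * ‖C x‖ := re_inner_le_norm x (C x)
    _ ≤ ‖x‖ * (‖C‖ * ‖x‖) := by gcongr; exact C.le_opNorm x
    _ = ‖C‖ * ‖x‖ ^ 2 := by ring

variable [CompleteSpace E]

theorem hasSum_norm_sq_of_hasSum_sq {ι : Type*} {j : ι → E →L[𝕜] E}
    (hj : ∀ i, IsSelfAdjoint (j i)) (hsum : ∀ x, HasSum (fun i => j i (j i x)) x) (x : E) :
    HasSum (fun i => ‖j i x‖ ^ 2) (‖x‖ ^ 2) := by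
  have h := RCLike.hasSum_re 𝕜 ((innerSL 𝕜 x).hasSum (hsum x))
  simp only [innerSL_apply_apply, inner_self_eq_norm_sq] at h
  refine h.congr_fun fun i => ?_
  rw [← adjoint_inner_left, ← star_eq_adjoint, (hj i).star_eq, inner_self_eq_norm_sq]

theorem star_commutator_of_isSelfAdjoint {A T : E →L[𝕜] E} (hA : IsSelfAdjoint A)
    (hT : IsSelfAdjoint T) : star (A ∘L T - T ∘L A) = -(A ∘L T - T ∘L A) := by
  change star (A * T - T * A) = -(A * T - T * A)
  rw [star_sub, star_mul, star_mul, hA.star_eq, hT.star_eq, neg_sub]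

theorem inner_commutator_commutator_self {A T : E →L[𝕜] E} (hA : IsSelfAdjoint A)
    (hT : IsSelfAdjoint T) (x : E) :
    ⟪x, (A ∘L T - T ∘L A) ((A ∘L T - T ∘L A) x)⟫_𝕜 = -((‖(A ∘L T - T ∘L A) x‖ : 𝕜) ^ 2) := by
  rw [← adjoint_inner_left, ← star_eq_adjoint, star_commutator_of_isSelfAdjoint hA hT,
    neg_apply, inner_neg_left, inner_self_eq_norm_sq_to_K]

theorem hasSum_two_mul_norm_commutator_sq {ι : Type*} {A C : E →L[𝕜] E} {j : ι → E →L[𝕜] E}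
    (hA : IsSelfAdjoint A) (hj : ∀ i, IsSelfAdjoint (j i)) {x : E}
    (hC : HasSum (fun i => (-2 : 𝕜) • ((A ∘L j i - j i ∘L A) ((A ∘L j i - j i ∘L A) x))) (C x)) :
    HasSum (fun i => 2 * ‖(A ∘L j i - j i ∘L A) x‖ ^ 2) (re ⟪x, C x⟫_𝕜) := by
  refine (RCLike.hasSum_re 𝕜 ((innerSL 𝕜 x).hasSum hC)).congr_fun fun i => ?_
  simp only [innerSL_apply_apply, inner_smul_right, inner_commutator_commutator_self hA (hj i),
    neg_mul_neg]
  norm_cast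

end

theorem stmt3_general {H : Type*} [NormedAddCommGroup H] [InnerProductSpace ℂ H] [CompleteSpace H]
    {S : Type*}
    (A : H →L[ℂ] H) (hA : IsSelfAdjoint A)
    (j : S → H →L[ℂ] H) (hj : ∀ α, IsSelfAdjoint (j α))
    (hsum : ∀ x : H, HasSum (fun α => j α (j α x)) x)
    (C : H →L[ℂ] H)
    (hC : ∀ x : H, HasSum
      (fun α => (-2 : ℂ) • ((A ∘L j α - j α ∘L A) ((A ∘L j α - j α ∘L A) x))) (C x))
    (φ : H) (hφ : φ ≠ 0) :
    ∃ α : S, j α φ ≠ 0 ∧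
      ‖A (j α φ)‖ ^ 2 ≤ (2 * ‖A φ‖ ^ 2 / ‖φ‖ ^ 2 + ‖C‖) * ‖j α φ‖ ^ 2 := by
  have hφ2 : ‖φ‖ ^ 2 ≠ 0 := by positivity
  obtain ⟨α, hα, hle⟩ := exists_ne_zero_le_mul_of_hasSum_le (fun α => by positivity)
    (fun α => norm_apply_apply_sq_le φ)
    (((hasSum_norm_sq_of_hasSum_sq hj hsum (A φ)).mul_left 2).add
      (hasSum_two_mul_norm_commutator_sq hA hj (hC φ)))
    (hasSum_norm_sq_of_hasSum_sq hj hsum φ) hφ2 (K := 2 * ‖A φ‖ ^ 2 / ‖φ‖ ^ 2 + ‖C‖)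
    (by field_simp; linarith [re_inner_apply_le_opNorm_mul_sq C φ])
  exact ⟨α, fun h => hα (by simp [h]), hle⟩

/-- the Last–Simon partition of unity estimate. -/
theorem stmt3 {H : Type*} [NormedAddCommGroup H] [InnerProductSpace ℂ H] [CompleteSpace H]
    {S : Type*} [Countable S]
    (A : H →L[ℂ] H) (hA : IsSelfAdjoint A)
    (j : S → H →L[ℂ] H) (hj : ∀ α, IsSelfAdjoint (j α))
    (hsum : ∀ x : H, HasSum (fun α => j α (j α x)) x)
    (C : H →L[ℂ] H)
    (hC : ∀ x : H, HasSum
      (fun α => (-2 : ℂ) • ((A ∘L j α - j α ∘L A) ((A ∘L j α - j α ∘L A) x))) (C x))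
    (φ : H) (hφ : φ ≠ 0) :
    ∃ α : S, j α φ ≠ 0 ∧
      ‖A (j α φ)‖ ^ 2 ≤ (2 * ‖A φ‖ ^ 2 / ‖φ‖ ^ 2 + ‖C‖) * ‖j α φ‖ ^ 2 :=
  stmt3_general A hA j hj hsum C hC φ hφ
end

section
/- Let $r > 1$, $N \in \mathbb{N}$, and let $S : \{1, \ldots, N\} \to (0, \infty)$ satisfy $\sum_{j=1}^{m} S(j) \leq \alpha\, S(m)$ for all $1 \leq m \leq N$ and some $\alpha > 0$. Let $x : \{1, \ldots, N\} \to [0, \infty)$ and define $g(n) = \sum_{k=1}^{n} x(k)$. Then $\sum_{n=1}^{N} S(N+1-n)\, g(n)^2 \leq 4\alpha^2 \sum_{n=1}^{N} S(N+1-n)\, x(n)^2$. -/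
/-- Abstract weighted discrete Hardy inequality with `p = 2`. -/
theorem hardy2_aux (N : ℕ) (lam : ℕ → ℝ) (hlam : ∀ n, 1 ≤ n → n ≤ N → 0 ≤ lam n)
    (α : ℝ) (hα : 0 ≤ α)
    (hL : ∀ n, 1 ≤ n → n ≤ N → ∑ k ∈ Finset.Icc n N, lam k ≤ α * lam n)
    (x : ℕ → ℝ) (hx : ∀ n, 0 ≤ x n) :
    ∑ n ∈ Finset.Icc 1 N, lam n * (∑ k ∈ Finset.Icc 1 n, x k) ^ 2 ≤
      4 * α ^ 2 * ∑ n ∈ Finset.Icc 1 N, lam n * x n ^ 2 := by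
  set g : ℕ → ℝ := fun n => ∑ k ∈ Finset.Icc 1 n, x k with hgdef
  set Λ : ℕ → ℝ := fun n => ∑ k ∈ Finset.Icc n N, lam k with hLdef
  have g0 : g 0 = 0 := by simp [hgdef]
  have gnonneg : ∀ n, 0 ≤ g n := fun n =>
    Finset.sum_nonneg fun k _ => hx k
  have gstep : ∀ m : ℕ, g (m + 1) = g m + x (m + 1) := by
    intro m
    simp only [hgdef]
    rw [Finset.sum_Icc_succ_top (by omega)]
  have Λnonneg : ∀ n, 1 ≤ n → 0 ≤ Λ n := by
    intro n hn
    apply Finset.sum_nonneg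
    intro k hk
    rw [Finset.mem_Icc] at hk
    exact hlam k (by omega) hk.2
  have lamΛ : ∀ n, 1 ≤ n → n ≤ N → lam n = Λ n - Λ (n + 1) := by
    intro n h1 h2
    have : Λ n = lam n + Λ (n + 1) := by
      simp only [hLdef]
      rw [← Finset.Ioc_insert_left h2, Finset.sum_insert (by simp), ← Finset.Icc_add_one_left_eq_Ioc]
    linarith
  have ΛN1 : Λ (N + 1) = 0 := by
    simp only [hLdef]
    rw [Finset.Icc_eq_empty (by omega), Finset.sum_empty]
  -- Abel summation
  have abel : ∀ M, M ≤ N →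
      ∑ n ∈ Finset.Icc 1 M, lam n * g n ^ 2 =
        (∑ n ∈ Finset.Icc 1 M, Λ n * (g n ^ 2 - g (n - 1) ^ 2)) - Λ (M + 1) * g M ^ 2 := by
    intro M
    induction M with
    | zero => simp [g0]
    | succ m ih =>
      intro h
      rw [Finset.sum_Icc_succ_top (by omega), Finset.sum_Icc_succ_top (by omega),
        ih (by omega), lamΛ (m + 1) (by omega) (by omega)]
      simp only [Nat.add_sub_cancel]
      ring
  have habel := abel N le_rfl
  rw [ΛN1] at habel
  set T : ℝ := ∑ n ∈ Finset.Icc 1 N, lam n * g n ^ 2 with hT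
  set A : ℝ := ∑ n ∈ Finset.Icc 1 N, lam n * x n ^ 2 with hA
  set B : ℝ := ∑ n ∈ Finset.Icc 1 N, lam n * x n * g n with hB
  have hTnonneg : 0 ≤ T := by
    apply Finset.sum_nonneg
    intro n hn
    rw [Finset.mem_Icc] at hn
    exact mul_nonneg (hlam n hn.1 hn.2) (sq_nonneg _)
  have hAnonneg : 0 ≤ A := by
    apply Finset.sum_nonneg
    intro n hn
    rw [Finset.mem_Icc] at hn
    exact mul_nonneg (hlam n hn.1 hn.2) (sq_nonneg _)
  have hBnonneg : 0 ≤ B := by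
    apply Finset.sum_nonneg
    intro n hn
    rw [Finset.mem_Icc] at hn
    exact mul_nonneg (mul_nonneg (hlam n hn.1 hn.2) (hx n)) (gnonneg n)
  -- T ≤ 2 α B
  have hT2B : T ≤ 2 * α * B := by
    have : T ≤ ∑ n ∈ Finset.Icc 1 N, 2 * α * (lam n * x n * g n) := by
      rw [habel, zero_mul, sub_zero]
      apply Finset.sum_le_sum
      intro n hn
      rw [Finset.mem_Icc] at hn
      obtain ⟨h1, h2⟩ := hn
      obtain ⟨m, rfl⟩ : ∃ m, n = m + 1 := ⟨n - 1, by omega⟩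
      simp only [Nat.add_sub_cancel]
      have hg1 : g (m + 1) = g m + x (m + 1) := gstep m
      have h3 : g (m + 1) ^ 2 - g m ^ 2 ≤ 2 * x (m + 1) * g (m + 1) := by
        nlinarith [hx (m + 1), gnonneg m, gnonneg (m + 1)]
      have h4 : Λ (m + 1) ≤ α * lam (m + 1) := hL (m + 1) h1 h2
      have h5 : 0 ≤ Λ (m + 1) := Λnonneg (m + 1) h1
      have h6 : 0 ≤ 2 * x (m + 1) * g (m + 1) :=
        mul_nonneg (mul_nonneg (by norm_num) (hx (m + 1))) (gnonneg (m + 1))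
      calc Λ (m + 1) * (g (m + 1) ^ 2 - g m ^ 2)
          ≤ Λ (m + 1) * (2 * x (m + 1) * g (m + 1)) := mul_le_mul_of_nonneg_left h3 h5
        _ ≤ (α * lam (m + 1)) * (2 * x (m + 1) * g (m + 1)) :=
            mul_le_mul_of_nonneg_right h4 h6
        _ = 2 * α * (lam (m + 1) * x (m + 1) * g (m + 1)) := by ring
    calc T ≤ ∑ n ∈ Finset.Icc 1 N, 2 * α * (lam n * x n * g n) := this
      _ = 2 * α * B := by rw [hB, Finset.mul_sum]
  -- Cauchy–Schwarz : B ^ 2 ≤ A * T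
  have hCS : B ^ 2 ≤ A * T := by
    have key := Finset.sum_mul_sq_le_sq_mul_sq (Finset.Icc 1 N)
      (fun n => Real.sqrt (lam n) * x n) (fun n => Real.sqrt (lam n) * g n)
    have e1 : ∑ n ∈ Finset.Icc 1 N,
        (Real.sqrt (lam n) * x n) * (Real.sqrt (lam n) * g n) = B := by
      rw [hB]
      apply Finset.sum_congr rfl
      intro n hn
      rw [Finset.mem_Icc] at hn
      have h := Real.mul_self_sqrt (hlam n hn.1 hn.2)
      linear_combination (x n * g n) * h
    have e2 : ∑ n ∈ Finset.Icc 1 N, (Real.sqrt (lam n) * x n) ^ 2 = A := by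
      rw [hA]
      apply Finset.sum_congr rfl
      intro n hn
      rw [Finset.mem_Icc] at hn
      rw [mul_pow, Real.sq_sqrt (hlam n hn.1 hn.2)]
    have e3 : ∑ n ∈ Finset.Icc 1 N, (Real.sqrt (lam n) * g n) ^ 2 = T := by
      rw [hT]
      apply Finset.sum_congr rfl
      intro n hn
      rw [Finset.mem_Icc] at hn
      rw [mul_pow, Real.sq_sqrt (hlam n hn.1 hn.2)]
    rw [e1, e2, e3] at key
    exact key
  -- conclude
  rcases eq_or_lt_of_le hTnonneg with h0 | h0
  · rw [← h0]
    positivity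
  · nlinarith [hT2B, hCS, hBnonneg, hTnonneg, hAnonneg, hα, mul_pos h0 h0]

/-- the consequence of Leindler's weighted discrete Hardy inequality
(with `p = 2`, `λₙ = S(N+1-n)`) used in Chapter 2. -/
theorem stmt19 (r : ℝ) (hr : 1 < r) (N : ℕ) (hN : 1 ≤ N)
    (S : ℕ → ℝ) (hSpos : ∀ j, 1 ≤ j → j ≤ N → 0 < S j)
    (α : ℝ) (hα : 0 < α)
    (hS : ∀ m, 1 ≤ m → m ≤ N → ∑ j ∈ Finset.Icc 1 m, S j ≤ α * S m)
    (x : ℕ → ℝ) (hx : ∀ n, 0 ≤ x n) :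
    ∑ n ∈ Finset.Icc 1 N, S (N + 1 - n) * (∑ k ∈ Finset.Icc 1 n, x k) ^ 2 ≤
      4 * α ^ 2 * ∑ n ∈ Finset.Icc 1 N, S (N + 1 - n) * x n ^ 2 := by
  apply hardy2_aux N (fun n => S (N + 1 - n)) ?_ α hα.le ?_ x hx
  · intro n h1 h2
    exact (hSpos (N + 1 - n) (by omega) (by omega)).le
  · intro n h1 h2
    have hre : ∑ k ∈ Finset.Icc n N, S (N + 1 - k) = ∑ j ∈ Finset.Icc 1 (N + 1 - n), S j := by
      apply Finset.sum_bij' (fun k _ => N + 1 - k) (fun j _ => N + 1 - j)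
      · intro a ha
        rw [Finset.mem_Icc] at ha ⊢
        omega
      · intro a ha
        rw [Finset.mem_Icc] at ha ⊢
        omega
      · intro a ha
        rw [Finset.mem_Icc] at ha
        omega
      · intro a ha
        rw [Finset.mem_Icc] at ha
        omega
      · intro a ha
        rfl
    rw [hre]
    exact hS (N + 1 - n) (by omega) (by omega)
end
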